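/- Lemma 5.2: the function u ↦ g(u,π) is positive on [0,1), i.e. g(u,π) > 0 for every u ∈ [0,1). -/

import Mathlib

/-- The function `g(u,β)` whose roots `u ∈ (0,1)` determine the spectral singularities of the
PT-symmetric waveguide with gain-and-loss amplitude `γ = β²/2`. (Note that for `u = 0` the
formula evaluates to `1`, the limit value as `u → 0⁺`, since in Lean `β/0 = 0`.) -/
noncomputable def g (u β : ℝ) : ℝ :=
  u^4 * (1 - u^4) * Real.cosh (β * u) * Real.cos (β / u)
    - 2 * u^6 * Real.sinh (β * u) * Real.sin (β / u) + 1 - u^12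

/-!
For `u ≤ 1/2` the oscillating terms are at most `u⁴ e^{πu} ≤ e²/16 < 1 - u¹²` in size. For
`u > 1/2` write `π/u = π + φ` with `φ = π(1-u)/u ∈ (0, π)`, so that
`g(u,π) = 1 - u¹² - u⁴(1-u⁴) cosh(πu) cos φ + 2u⁶ sinh(πu) sin φ`.
If `φ ≥ π/2` every term is nonnegative. If `φ ≤ π/2`, Jordan's inequality `sin φ ≥ 2φ/π`
makes the sinh term at least `4u⁵(1-u) sinh(πu)`, while `u⁴(1-u⁴) ≤ 4u⁵(1-u)` and
`cosh ≤ sinh + 1` bound the cosh term by `4u⁵(1-u)(sinh(πu) + 1)`; what remains is the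
polynomial inequality `4u⁵(1-u) < 1 - u¹²`.
-/

open Real

section

variable {u β : ℝ}

lemma one_sub_pow_twelve_sub_pow_four_mul_exp_le_g (hβ : 0 ≤ β) (hu0 : 0 ≤ u)
    (hu : 2 * u ^ 2 ≤ 1) : 1 - u ^ 12 - u ^ 4 * exp (β * u) ≤ g u β := by
  have hsinh : 0 ≤ sinh (β * u) := sinh_nonneg_iff.mpr (mul_nonneg hβ hu0)
  have hcosh : 0 ≤ cosh (β * u) := (cosh_pos _).le
  have hu4 : 0 ≤ u ^ 4 := by positivity
  have hu4_le : u ^ 4 ≤ 1 := by nlinarith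
  have hu6 : 2 * u ^ 6 ≤ u ^ 4 := by nlinarith
  have hcos_term :
      -(u ^ 4 * cosh (β * u)) ≤ u ^ 4 * (1 - u ^ 4) * cosh (β * u) * cos (β / u) := by
    have : -1 ≤ (1 - u ^ 4) * cos (β / u) := by
      nlinarith [neg_one_le_cos (β / u), cos_le_one (β / u)]
    nlinarith [mul_le_mul_of_nonneg_left this (mul_nonneg hu4 hcosh)]
  have hsin_term : 2 * u ^ 6 * sinh (β * u) * sin (β / u) ≤ u ^ 4 * sinh (β * u) :=
    calc 2 * u ^ 6 * sinh (β * u) * sin (β / u) ≤ 2 * u ^ 6 * sinh (β * u) :=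
          mul_le_of_le_one_right (by positivity) (sin_le_one _)
      _ ≤ u ^ 4 * sinh (β * u) := mul_le_mul_of_nonneg_right hu6 hsinh
  rw [← cosh_add_sinh]
  unfold g
  linarith

lemma g_pos_of_cos_nonneg_of_sin_nonpos (hβ : 0 ≤ β) (hu0 : 0 ≤ u) (hu1 : u < 1)
    (hcos : 0 ≤ cos (β / u)) (hsin : sin (β / u) ≤ 0) : 0 < g u β := by
  have hsinh : 0 ≤ sinh (β * u) := sinh_nonneg_iff.mpr (mul_nonneg hβ hu0)
  have hu12 : u ^ 12 < 1 := pow_lt_one₀ hu0 hu1 (by norm_num)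
  have hu4 : 0 ≤ 1 - u ^ 4 := sub_nonneg.mpr (pow_le_one₀ hu0 hu1.le)
  have hcos_term : 0 ≤ u ^ 4 * (1 - u ^ 4) * cosh (β * u) * cos (β / u) := by
    have := (cosh_pos (β * u)).le
    positivity
  have hsin_term : 2 * u ^ 6 * sinh (β * u) * sin (β / u) ≤ 0 :=
    mul_nonpos_of_nonneg_of_nonpos (by positivity) hsin
  unfold g
  linarith

lemma pow_four_mul_one_sub_pow_four_le (hu : 1 / 2 ≤ u) :
    u ^ 4 * (1 - u ^ 4) ≤ 4 * u ^ 5 * (1 - u) := by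
  have h : 4 * u ^ 5 * (1 - u) - u ^ 4 * (1 - u ^ 4)
      = u ^ 4 * (1 - u) ^ 2 * (u ^ 2 + 2 * u - 1) := by
    ring
  have : 0 ≤ u ^ 2 + 2 * u - 1 := by nlinarith
  have : 0 ≤ u ^ 4 * (1 - u) ^ 2 * (u ^ 2 + 2 * u - 1) := by positivity
  linarith

lemma four_mul_pow_five_mul_one_sub_lt (hu0 : 0 ≤ u) (hu1 : u < 1) :
    4 * u ^ 5 * (1 - u) < 1 - u ^ 12 := by
  have h : 1 - u ^ 12 - 4 * u ^ 5 * (1 - u)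
      = (1 - u) ^ 2 * (1 + 2 * u + 3 * u ^ 2 + 4 * u ^ 3 + 5 * u ^ 4)
        + 2 * u ^ 5 * (1 - u) + u ^ 6 * (1 - u ^ 6) := by
    ring
  have ht : 0 < 1 - u := by linarith
  have hu6 : 0 ≤ 1 - u ^ 6 := sub_nonneg.mpr (pow_le_one₀ hu0 hu1.le)
  have : 0 < (1 - u) ^ 2 * (1 + 2 * u + 3 * u ^ 2 + 4 * u ^ 3 + 5 * u ^ 4) := by positivity
  have : 0 ≤ 2 * u ^ 5 * (1 - u) + u ^ 6 * (1 - u ^ 6) := by positivity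
  linarith

lemma g_pi_pos_of_le_half (hu0 : 0 ≤ u) (hu : u ≤ 1 / 2) : 0 < g u π := by
  have hg := one_sub_pow_twelve_sub_pow_four_mul_exp_le_g pi_pos.le hu0 (by nlinarith)
  have hu4 : u ^ 4 ≤ 1 / 16 := by
    calc u ^ 4 ≤ (1 / 2) ^ 4 := pow_le_pow_left₀ hu0 hu 4
      _ = 1 / 16 := by norm_num
  have hu12 : u ^ 12 ≤ u ^ 4 := pow_le_pow_of_le_one hu0 (by linarith) (by norm_num)
  have hexp : exp (π * u) < 9 :=
    calc exp (π * u) ≤ exp 1 * exp 1 := by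
          rw [← exp_add, exp_le_exp]; nlinarith [pi_lt_four]
      _ < 3 * 3 := mul_lt_mul'' exp_one_lt_three exp_one_lt_three (exp_pos 1).le (exp_pos 1).le
      _ = 9 := by norm_num
  nlinarith [mul_le_mul_of_nonneg_left hexp.le (by positivity : (0 : ℝ) ≤ u ^ 4)]

lemma cos_pi_div_nonneg_and_sin_pi_div_nonpos (hu : 1 / 2 ≤ u) (hu' : u ≤ 2 / 3) :
    0 ≤ cos (π / u) ∧ sin (π / u) ≤ 0 := by
  have hu0 : 0 < u := by linarith
  have hlo : 3 / 2 * π ≤ π / u := by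
    rw [le_div_iff₀ hu0]; nlinarith [pi_pos]
  have hhi : π / u ≤ 2 * π := by
    rw [div_le_iff₀ hu0]; nlinarith [pi_pos]
  rw [← cos_sub_two_pi, ← sin_sub_two_pi]
  exact ⟨cos_nonneg_of_neg_pi_div_two_le_of_le (by linarith) (by linarith),
    sin_nonpos_of_nonpos_of_neg_pi_le (by linarith) (by linarith [pi_pos])⟩

lemma g_pi_pos_of_two_thirds_le (hu : 2 / 3 ≤ u) (hu1 : u < 1) : 0 < g u π := by
  have hu0 : 0 < u := by linarith
  have ht : 0 ≤ 1 - u := by linarith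
  set φ := π * (1 - u) / u with hφ
  have hshift : π / u = φ + π := by rw [hφ]; field_simp; ring
  have hφ0 : 0 ≤ φ := div_nonneg (mul_nonneg pi_pos.le ht) hu0.le
  have hφ1 : φ ≤ π / 2 := by
    rw [hφ, div_le_iff₀ hu0]; nlinarith [pi_pos]
  have hsin : 2 * (1 - u) ≤ u * sin φ := by
    have h := mul_le_sin hφ0 hφ1
    rw [show 2 / π * φ = 2 * (1 - u) / u by rw [hφ]; field_simp, div_le_iff₀ hu0] at h
    linarith
  have hsinh : 0 ≤ sinh (π * u) := sinh_nonneg_iff.mpr (by positivity)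
  have hcosh : cosh (π * u) ≤ sinh (π * u) + 1 := by
    have := cosh_sub_sinh (π * u)
    have : exp (-(π * u)) ≤ 1 := exp_le_one_iff.mpr (by nlinarith [pi_pos])
    linarith
  have hA : 0 ≤ u ^ 4 * (1 - u ^ 4) * cosh (π * u) := by
    have : 0 ≤ 1 - u ^ 4 := sub_nonneg.mpr (pow_le_one₀ hu0.le hu1.le)
    have := (cosh_pos (π * u)).le
    positivity
  have hcos_term : u ^ 4 * (1 - u ^ 4) * cosh (π * u) * cos φ
      ≤ 4 * u ^ 5 * (1 - u) * (sinh (π * u) + 1) :=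
    calc u ^ 4 * (1 - u ^ 4) * cosh (π * u) * cos φ ≤ u ^ 4 * (1 - u ^ 4) * cosh (π * u) :=
          mul_le_of_le_one_right hA (cos_le_one φ)
      _ ≤ 4 * u ^ 5 * (1 - u) * (sinh (π * u) + 1) :=
          mul_le_mul (pow_four_mul_one_sub_pow_four_le (by linarith)) hcosh (cosh_pos _).le
            (by positivity)
  have hsin_term :
      4 * u ^ 5 * (1 - u) * sinh (π * u) ≤ 2 * u ^ 6 * sinh (π * u) * sin φ := by
    have := mul_le_mul_of_nonneg_left hsin (by positivity : 0 ≤ 2 * u ^ 5 * sinh (π * u))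
    linarith
  unfold g
  rw [hshift, cos_add_pi, sin_add_pi]
  nlinarith [four_mul_pow_five_mul_one_sub_lt hu0.le hu1]

end

theorem stmt_18 (u : ℝ) (hu0 : 0 ≤ u) (hu1 : u < 1) : 0 < g u Real.pi := by
  rcases le_or_gt u (1 / 2) with hsmall | hhalf
  · exact g_pi_pos_of_le_half hu0 hsmall
  rcases le_or_gt u (2 / 3) with hmid | hlarge
  · obtain ⟨hcos, hsin⟩ := cos_pi_div_nonneg_and_sin_pi_div_nonpos hhalf.le hmid
    exact g_pos_of_cos_nonneg_of_sin_nonpos pi_pos.le hu0 hu1 hcos hsin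
  · exact g_pi_pos_of_two_thirds_le hlarge.le hu1
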